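/- arXiv:0804.1732 — 2 statements merged into one kernel-verified Lean document; each statement's English description precedes it below -/
import Mathlib

section
/- Let U ⊆ ℝ^m be open and let ω : U → (ℝ^m →L[ℝ] Matrix (Fin N) (Fin N) ℝ) be a smooth connection form. Suppose A : U → Matrix (Fin N) (Fin N) ℝ is a smooth map such that A(x) is invertible for every x ∈ U and for all x ∈ U and u ∈ ℝ^m, the Fréchet derivative of A at x in direction u equals −(ω(x)(u)) * A(x) (i.e. every column of A is a parallel section, and together they form a parallel frame). Then the curvature of ω vanishes identically: for all x ∈ U and u, v ∈ ℝ^m, D_u(y ↦ ω(y)(v))(x) − D_v(y ↦ ω(y)(u))(x) + ω(x)(u) * ω(x)(v) − ω(x)(v) * ω(x)(u) = 0. -/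
/-!
Differentiating `dA = -ω A` once more gives
`D_u (D_v A) = ω(v) ω(u) A - (D_u ω(v)) A`, so the antisymmetrised second derivative
`D_v (D_u A) - D_u (D_v A)` equals `Ω(u, v) A`. The left side vanishes by symmetry of second
derivatives, and `A` is invertible, hence `Ω = 0`.
-/

attribute [local instance] Matrix.normedAddCommGroup Matrix.normedSpace

open Filter Topology

section

variable {𝕜 : Type*} [RCLike 𝕜] {E : Type*} [NormedAddCommGroup E] [NormedSpace 𝕜 E]

theorem fderiv_clm_apply_const {F : Type*} [NormedAddCommGroup F] [NormedSpace 𝕜 F]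
    {c : E → E →L[𝕜] F} {x : E} (hc : DifferentiableAt 𝕜 c x) (u v : E) :
    fderiv 𝕜 (fun y => c y v) x u = fderiv 𝕜 c x u v := by
  simp [fderiv_clm_apply hc (differentiableAt_const v)]

theorem ContDiffAt.fderiv_fderiv_apply_comm {F : Type*} [NormedAddCommGroup F]
    [NormedSpace 𝕜 F] {f : E → F} {x : E} (hf : ContDiffAt 𝕜 2 f x) (u v : E) :
    fderiv 𝕜 (fun y => fderiv 𝕜 f y v) x u = fderiv 𝕜 (fun y => fderiv 𝕜 f y u) x v := by
  have hf' : DifferentiableAt 𝕜 (fderiv 𝕜 f) x :=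
    (hf.fderiv_right (m := 1) le_rfl).differentiableAt one_ne_zero
  rw [fderiv_clm_apply_const hf', fderiv_clm_apply_const hf']
  exact hf.isSymmSndFDerivAt (by simp) u v

variable {n : Type*} [Fintype n]

/-- Continuous because everything is finite-dimensional; the sup norm on matrices is not
submultiplicative, so the normed-ring product rule is not available. -/
noncomputable def matrixMulCLM : Matrix n n 𝕜 →L[𝕜] Matrix n n 𝕜 →L[𝕜] Matrix n n 𝕜 :=
  LinearMap.toContinuousLinearMap
    (LinearMap.toContinuousLinearMap.toLinearMap.comp (LinearMap.mul 𝕜 (Matrix n n 𝕜)))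

theorem fderiv_matrix_mul_apply {f g : E → Matrix n n 𝕜} {x : E}
    (hf : DifferentiableAt 𝕜 f x) (hg : DifferentiableAt 𝕜 g x) (u : E) :
    fderiv 𝕜 (fun y => f y * g y) x u = f x * fderiv 𝕜 g x u + fderiv 𝕜 f x u * g x :=
  congr($((matrixMulCLM (n := n)).fderiv_of_bilinear hf hg) u)

noncomputable def curvature (ω : E → E →L[𝕜] Matrix n n 𝕜) (x u v : E) : Matrix n n 𝕜 :=
  fderiv 𝕜 (fun y => ω y v) x u - fderiv 𝕜 (fun y => ω y u) x v + ω x u * ω x v - ω x v * ω x u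

variable {ω : E → E →L[𝕜] Matrix n n 𝕜} {A : E → Matrix n n 𝕜} {x : E}

theorem fderiv_fderiv_apply_of_parallel (hω : DifferentiableAt 𝕜 ω x)
    (hA : DifferentiableAt 𝕜 A x) (hpar : ∀ᶠ y in 𝓝 x, ∀ u, fderiv 𝕜 A y u = -(ω y u) * A y)
    (u v : E) :
    fderiv 𝕜 (fun y => fderiv 𝕜 A y v) x u
      = ω x v * ω x u * A x - fderiv 𝕜 (fun y => ω y v) x u * A x := by
  have hωv : DifferentiableAt 𝕜 (fun y => -ω y v) x :=
    (hω.clm_apply (differentiableAt_const v)).neg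
  have hparv : (fun y => fderiv 𝕜 A y v) =ᶠ[𝓝 x] fun y => -ω y v * A y :=
    hpar.mono fun y hy => hy v
  -- The matrix negation here is not reducibly the normed-group one, so `rw [fderiv_fun_neg]`
  -- would fail to match.
  have hneg : fderiv 𝕜 (fun y => -ω y v) x u = -fderiv 𝕜 (fun y => ω y v) x u :=
    congr($(fderiv_fun_neg (𝕜 := 𝕜) (f := fun y => ω y v) (x := x)) u)
  rw [hparv.fderiv_eq, fderiv_matrix_mul_apply hωv hA, hneg, hpar.self_of_nhds u]
  noncomm_ring

theorem curvature_mul_of_parallel [DecidableEq n] (hω : DifferentiableAt 𝕜 ω x)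
    (hA : DifferentiableAt 𝕜 A x) (hpar : ∀ᶠ y in 𝓝 x, ∀ u, fderiv 𝕜 A y u = -(ω y u) * A y)
    (u v : E) :
    curvature ω x u v * A x
      = fderiv 𝕜 (fun y => fderiv 𝕜 A y u) x v - fderiv 𝕜 (fun y => fderiv 𝕜 A y v) x u := by
  rw [fderiv_fderiv_apply_of_parallel hω hA hpar, fderiv_fderiv_apply_of_parallel hω hA hpar,
    curvature]
  noncomm_ring

theorem curvature_eq_zero_of_parallel_frame [DecidableEq n] (hω : DifferentiableAt 𝕜 ω x)
    (hA : ContDiffAt 𝕜 2 A x) (hAx : IsUnit (A x))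
    (hpar : ∀ᶠ y in 𝓝 x, ∀ u, fderiv 𝕜 A y u = -(ω y u) * A y) (u v : E) :
    curvature ω x u v = 0 :=
  hAx.mul_left_injective <| by
    change curvature ω x u v * A x = 0 * A x
    rw [curvature_mul_of_parallel hω (hA.differentiableAt two_ne_zero) hpar, zero_mul]
    exact sub_eq_zero.2 (hA.fderiv_fderiv_apply_comm v u)

end

/-- **Corollary 1, trivialized.** If a connection form `ω` admits a smooth parallel
frame `A` (an invertible-matrix-valued solution of `dA = -ω·A`), then the curvature
of `ω` vanishes identically. -/
theorem curvature_vanishes_of_parallel_frame {m N : ℕ} {U : Set (Fin m → ℝ)}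
    (hU : IsOpen U)
    (ω : (Fin m → ℝ) → ((Fin m → ℝ) →L[ℝ] Matrix (Fin N) (Fin N) ℝ))
    (hω : @ContDiffOn ℝ _ _ _ _ _ ContinuousLinearMap.toNormedAddCommGroup
      ContinuousLinearMap.toNormedSpace ⊤ ω U)
    (A : (Fin m → ℝ) → Matrix (Fin N) (Fin N) ℝ)
    (hA : ContDiffOn ℝ ⊤ A U)
    (hinv : ∀ x ∈ U, IsUnit (A x))
    (hpar : ∀ x ∈ U, ∀ u : Fin m → ℝ, fderiv ℝ A x u = -(ω x u) * A x) :
    ∀ x ∈ U, ∀ u v : Fin m → ℝ,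
      fderiv ℝ (fun y => ω y v) x u - fderiv ℝ (fun y => ω y u) x v
        + ω x u * ω x v - ω x v * ω x u = 0 := by
  intro x hx u v
  have hUx : U ∈ 𝓝 x := hU.mem_nhds hx
  exact curvature_eq_zero_of_parallel_frame
    ((hω.contDiffAt hUx).differentiableAt (by simp))
    ((hA.contDiffAt hUx).of_le le_top) (hinv x hx)
    (Filter.mem_of_superset hUx hpar) u v
end

section
/- Let U = (0, π) × ℝ ⊆ ℝ² with coordinates (θ, φ), and define a smooth connection form ω : U → (ℝ² →L[ℝ] Matrix (Fin 3) (Fin 3) ℝ) by linearity from ω(θ,φ)(e₁) = [[0,0,0],[0,−2cot θ,0],[0,0,−cot θ]] and ω(θ,φ)(e₂) = [[0,0,−2cot θ],[0,0,2 sin θ cos θ],[sin θ cos θ,−cot θ,0]]. Then for every (θ,φ) ∈ U, the curvature Ω(θ,φ)(e₁,e₂) = D_{e₁}(y ↦ ω(y)(e₂))(θ,φ) − D_{e₂}(y ↦ ω(y)(e₁))(θ,φ) + ω(θ,φ)(e₁) * ω(θ,φ)(e₂) − ω(θ,φ)(e₂) * ω(θ,φ)(e₁) equals the matrix [[0,0,2],[0,0,−2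 sin²θ],[−sin²θ,1,0]], and the kernel of this matrix (acting on ℝ³ by mulVec) is exactly the one-dimensional span of the vector (1, sin²θ, 0). -/
attribute [local instance] Matrix.normedAddCommGroup Matrix.normedSpace

@[reducible] noncomputable def matrixSupNormTopology {m n α : Type*} [Fintype m] [Fintype n]
    [NormedAddCommGroup α] : TopologicalSpace (Matrix m n α) :=
  (Matrix.normedAddCommGroup : NormedAddCommGroup (Matrix m n α)).toUniformSpace.toTopologicalSpace

attribute [local instance] matrixSupNormTopology

set_option maxHeartbeats 1000000

/-- **The paper's example: curvature computation.** On `U = (0, π) × ℝ`, the curvature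
`Ω(e₁, e₂)` of the connection form of the induced connection on symmetric 2-tensors of
`S²` equals `!![0,0,2; 0,0,-2sin²θ; -sin²θ,1,0]`, and its kernel is exactly the span of
`(1, sin²θ, 0)`, identifying `W⁽⁰⁾ = span(X₁ + sin²θ X₂)`. -/
theorem curvature_of_sphere_example
    (U : Set (Fin 2 → ℝ)) (hUdef : U = {x : Fin 2 → ℝ | x 0 ∈ Set.Ioo 0 Real.pi})
    (ω : (Fin 2 → ℝ) → ((Fin 2 → ℝ) →L[ℝ] Matrix (Fin 3) (Fin 3) ℝ))
    (hω : ContDiffOn ℝ (⊤ : ℕ∞) ω U)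
    (hω1 : ∀ x : Fin 2 → ℝ, ω x (Pi.single 0 1) =
      !![0, 0, 0;
         0, -2 * Real.cot (x 0), 0;
         0, 0, -Real.cot (x 0)])
    (hω2 : ∀ x : Fin 2 → ℝ, ω x (Pi.single 1 1) =
      !![0, 0, -2 * Real.cot (x 0);
         0, 0, 2 * Real.sin (x 0) * Real.cos (x 0);
         Real.sin (x 0) * Real.cos (x 0), -Real.cot (x 0), 0]) :
    ∀ x ∈ U,
      fderiv ℝ (fun y => ω y (Pi.single 1 1)) x (Pi.single 0 1)
        - fderiv ℝ (fun y => ω y (Pi.single 0 1)) x (Pi.single 1 1)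
        + ω x (Pi.single 0 1) * ω x (Pi.single 1 1)
        - ω x (Pi.single 1 1) * ω x (Pi.single 0 1)
      = !![0, 0, 2;
           0, 0, -2 * Real.sin (x 0) ^ 2;
           -Real.sin (x 0) ^ 2, 1, 0] ∧
      {v : Fin 3 → ℝ |
          (!![0, 0, 2;
              0, 0, -2 * Real.sin (x 0) ^ 2;
              -Real.sin (x 0) ^ 2, 1, 0] : Matrix (Fin 3) (Fin 3) ℝ).mulVec v = 0}
        = (Submodule.span ℝ {![1, Real.sin (x 0) ^ 2, 0]} : Set (Fin 3 → ℝ)) := by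
  intro x hx
  rw [hUdef] at hx
  obtain ⟨h0, hπ⟩ := hx
  have hs : Real.sin (x 0) ≠ 0 := ne_of_gt (Real.sin_pos_of_pos_of_lt_pi h0 hπ)
  set s := Real.sin (x 0) with hsdef
  set c := Real.cos (x 0) with hcdef
  have hsc : s ^ 2 + c ^ 2 = 1 := Real.sin_sq_add_cos_sq (x 0)
  -- derivative of cot
  have hcot : HasDerivAt Real.cot (-(1 / s ^ 2)) (x 0) := by
    have h := (Real.hasDerivAt_cos (x 0)).div (Real.hasDerivAt_sin (x 0)) hs
    have heq : (Real.cos / Real.sin : ℝ → ℝ) = Real.cot := by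
      funext t; rw [Pi.div_apply, Real.cot_eq_cos_div_sin]
    rw [heq] at h
    exact h.congr_deriv (by
      rw [← hsdef, ← hcdef, show -s * s - c * c = -1 by linear_combination -hsc]
      ring)
  have hsincos : HasDerivAt (fun t => Real.sin t * Real.cos t) (c ^ 2 - s ^ 2) (x 0) := by
    have h := (Real.hasDerivAt_sin (x 0)).mul (Real.hasDerivAt_cos (x 0))
    exact h.congr_deriv (by rw [← hsdef, ← hcdef]; ring)
  -- matrix-valued derivative functions
  have hproj : HasFDerivAt (fun y : Fin 2 → ℝ => y 0)
      (ContinuousLinearMap.proj (R := ℝ) (φ := fun _ : Fin 2 => ℝ) 0) x :=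
    hasFDerivAt_apply 0 x
  -- g₂ and its derivative
  have hg2 : HasDerivAt (fun t => Real.cot t • (!![0,0,-2;0,0,0;0,-1,0] : Matrix (Fin 3) (Fin 3) ℝ)
        + (Real.sin t * Real.cos t) • (!![0,0,0;0,0,2;1,0,0] : Matrix (Fin 3) (Fin 3) ℝ))
      ((-(1 / s ^ 2)) • (!![0,0,-2;0,0,0;0,-1,0] : Matrix (Fin 3) (Fin 3) ℝ)
        + (c ^ 2 - s ^ 2) • (!![0,0,0;0,0,2;1,0,0] : Matrix (Fin 3) (Fin 3) ℝ)) (x 0) :=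
    (hcot.smul_const _).add (hsincos.smul_const _)
  have hg1 : HasDerivAt (fun t => Real.cot t • (!![0,0,0;0,-2,0;0,0,-1] : Matrix (Fin 3) (Fin 3) ℝ))
      ((-(1 / s ^ 2)) • (!![0,0,0;0,-2,0;0,0,-1] : Matrix (Fin 3) (Fin 3) ℝ)) (x 0) :=
    hcot.smul_const _
  have heq2 : (fun y : Fin 2 → ℝ => ω y (Pi.single 1 1)) =
      (fun t => Real.cot t • (!![0,0,-2;0,0,0;0,-1,0] : Matrix (Fin 3) (Fin 3) ℝ)
        + (Real.sin t * Real.cos t) • (!![0,0,0;0,0,2;1,0,0] : Matrix (Fin 3) (Fin 3) ℝ))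
        ∘ (fun y : Fin 2 → ℝ => y 0) := by
    funext y
    rw [Function.comp_apply, hω2 y]
    ext i j
    fin_cases i <;> fin_cases j <;>
      simp [Matrix.add_apply, Matrix.smul_apply, Matrix.vecHead, Matrix.vecTail] <;> ring
  have heq1 : (fun y : Fin 2 → ℝ => ω y (Pi.single 0 1)) =
      (fun t => Real.cot t • (!![0,0,0;0,-2,0;0,0,-1] : Matrix (Fin 3) (Fin 3) ℝ))
        ∘ (fun y : Fin 2 → ℝ => y 0) := by
    funext y
    rw [Function.comp_apply, hω1 y]
    ext i j
    fin_cases i <;> fin_cases j <;>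
      simp [Matrix.smul_apply, Matrix.vecHead, Matrix.vecTail] <;> ring
  have hd2 : fderiv ℝ (fun y => ω y (Pi.single 1 1)) x (Pi.single 0 1)
      = (-(1 / s ^ 2)) • (!![0,0,-2;0,0,0;0,-1,0] : Matrix (Fin 3) (Fin 3) ℝ)
        + (c ^ 2 - s ^ 2) • (!![0,0,0;0,0,2;1,0,0] : Matrix (Fin 3) (Fin 3) ℝ) := by
    rw [heq2, (hg2.hasFDerivAt.comp x hproj).fderiv]
    simp
  have hd1 : fderiv ℝ (fun y => ω y (Pi.single 0 1)) x (Pi.single 1 1) = 0 := by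
    rw [heq1, (hg1.hasFDerivAt.comp x hproj).fderiv]
    simp
  constructor
  · rw [hd1, hd2, hω1 x, hω2 x]
    ext i j
    fin_cases i <;> fin_cases j <;>
      simp [Matrix.mul_apply, Fin.sum_univ_three, Matrix.add_apply, Matrix.sub_apply,
        Matrix.smul_apply, Matrix.vecHead, Matrix.vecTail, Real.cot_eq_cos_div_sin,
        ← hsdef, ← hcdef]
    all_goals field_simp
    all_goals first
      | ring1
      | linear_combination hsc
      | linear_combination 2 * hsc
      | linear_combination (-2 : ℝ) * hsc
      | linear_combination s * hsc
      | linear_combination (-s) * hsc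
      | linear_combination 2 * s * hsc
      | linear_combination (-2 * s) * hsc
      | linear_combination s ^ 2 * hsc
      | linear_combination (-(s ^ 2)) * hsc
      | linear_combination 2 * s ^ 2 * hsc
      | linear_combination (-2 * s ^ 2) * hsc
      | linear_combination s ^ 3 * hsc
      | linear_combination (-(s ^ 3)) * hsc
      | linear_combination 2 * s ^ 3 * hsc
      | linear_combination (-2 * s ^ 3) * hsc
      | linear_combination s ^ 4 * hsc
      | linear_combination (-(s ^ 4)) * hsc
      | nlinarith [hsc, sq_nonneg s, sq_nonneg c]
  · ext v
    simp only [Set.mem_setOf_eq, SetLike.mem_coe, Submodule.mem_span_singleton]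
    constructor
    · intro h
      have h0 := congrFun h 0
      have h2 := congrFun h 2
      simp [Matrix.mulVec, dotProduct, Fin.sum_univ_three, Matrix.vecHead,
        Matrix.vecTail] at h0 h2
      refine ⟨v 0, ?_⟩
      funext i
      fin_cases i <;> simp [Matrix.vecHead, Matrix.vecTail]
      · linarith [h2]
      · exact h0.symm ▸ h0
    · rintro ⟨a, rfl⟩
      funext i
      fin_cases i <;>
        simp [Matrix.mulVec, dotProduct, Fin.sum_univ_three, Matrix.vecHead,
          Matrix.vecTail] <;> ring
end
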